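/- In every stochastic reachability game with partial observation on both sides, every initial distribution δ ∈ Δ(K) is positively winning for player 1 or surely winning for player 2, and not both. -/

import Mathlib

/-!
Whether a finite play has positive probability depends on player 1's strategy only through
the supports of the mixed actions it prescribes. The uniformly random strategy has full
support, so it reaches `T` with positive probability against `τ` as soon as some strategy
does. Hence either the random strategy is positively winning, or some `τ` holds it to
probability `0`, and then it holds every strategy of player 1 to `0`.
-/

open scoped Classical

noncomputable section

/-- A probability distribution on a finite type, given by a nonnegative
real-valued density summing to `1`. -/
structure FDist (X : Type*) [Fintype X] where
  f : X → ℝ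
  nonneg : ∀ x, 0 ≤ f x
  sum_one : ∑ x, f x = 1

/-- The support of a distribution: the set of points with positive probability. -/
def FDist.support {X : Type*} [Fintype X] (δ : FDist X) : Finset X :=
  Finset.univ.filter fun x => 0 < δ.f x

/-- The uniform distribution on a nonempty finite set. -/
def uniform {X : Type*} [Fintype X] (L : Finset X) (hL : L.Nonempty) : FDist X where
  f x := if x ∈ L then (L.card : ℝ)⁻¹ else 0
  nonneg x := by split_ifs <;> positivity
  sum_one := by
    rw [Finset.sum_ite_mem, Finset.univ_inter, Finset.sum_const, nsmul_eq_mul,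
      mul_inv_cancel₀]
    exact_mod_cast (Finset.card_pos.mpr hL).ne'

/-- Uniform distribution on `L`, defaulting to the uniform distribution on the
whole type when `L` is empty. -/
def uniformD {X : Type*} [Fintype X] [Nonempty X] (L : Finset X) : FDist X :=
  if h : L.Nonempty then uniform L h else uniform Finset.univ Finset.univ_nonempty

/-- The Dirac distribution on a point. -/
def dirac {X : Type*} [Fintype X] (x : X) : FDist X where
  f y := if y = x then 1 else 0
  nonneg y := by by_cases h : y = x <;> simp [h]
  sum_one := by simp

/-- A stochastic game with partial observation on both sides and a reachability
objective for player 1: states `K`, actions `I`, `J`, signals `C`, `D`, target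
states `T`, transition probabilities `p`, and actions encoded in signals via
`act₁`, `act₂`. -/
structure Game (K I J C D : Type*) [Fintype K] [Fintype I] [Fintype J] [Fintype C] [Fintype D] where
  T : Finset K
  p : K → I → J → C × D × K → ℝ
  p_nonneg : ∀ k i j x, 0 ≤ p k i j x
  p_sum : ∀ k i j, ∑ x : C × D × K, p k i j x = 1
  act₁ : C → I
  act₂ : D → J
  act_compat : ∀ k i j c d l, 0 < p k i j (c, d, l) → i = act₁ c ∧ j = act₂ d

/-- A (behavioral) strategy of player 1: a distribution on actions for each
finite sequence of received signals. -/
abbrev Strategy1 (I C : Type*) [Fintype I] : Type _ := List C → FDist I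

/-- A (behavioral) strategy of player 2. -/
abbrev Strategy2 (J D : Type*) [Fintype J] : Type _ := List D → FDist J

/-- A play with `n+1` states: the initial state followed by `n` steps, each
consisting of a signal for player 1, a signal for player 2 and the next state. -/
structure Hist (K C D : Type*) (n : ℕ) where
  first : K
  steps : Fin n → C × D × K

instance (K C D : Type*) [Fintype K] [Fintype C] [Fintype D] (n : ℕ) :
    Fintype (Hist K C D n) :=
  Fintype.ofEquiv (K × (Fin n → C × D × K))
    { toFun := fun x => ⟨x.1, x.2⟩
      invFun := fun h => (h.first, h.steps)
      left_inv := fun _ => rfl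
      right_inv := fun _ => rfl }

namespace Hist

variable {K C D : Type*}

/-- The last state of a play. -/
def last : ∀ {n : ℕ}, Hist K C D n → K
  | 0, h => h.first
  | n + 1, h => (h.steps (Fin.last n)).2.2

/-- The play obtained by removing the last step. -/
def init {n : ℕ} (h : Hist K C D (n + 1)) : Hist K C D n :=
  ⟨h.first, fun m => h.steps m.castSucc⟩

/-- The `m`-th state of a play, `0`-indexed: `state h 0` is the initial state
(called `k₁` in `1`-indexed notation). -/
def state {n : ℕ} (h : Hist K C D n) (m : Fin (n + 1)) : K :=
  if hm : m.val = 0 then h.first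
  else (h.steps ⟨m.val - 1, by have := m.isLt; omega⟩).2.2

/-- The sequence of signals received by player 1 along the play. -/
def sig1 {n : ℕ} (h : Hist K C D n) : List C := List.ofFn fun m => (h.steps m).1

/-- The sequence of signals received by player 2 along the play. -/
def sig2 {n : ℕ} (h : Hist K C D n) : List D := List.ofFn fun m => (h.steps m).2.1

/-- The play visits the target set `T`. -/
def visits (T : Finset K) {n : ℕ} (h : Hist K C D n) : Prop :=
  ∃ m : Fin (n + 1), h.state m ∈ T

end Hist

namespace Game

variable {K I J C D : Type*} [Fintype K] [Fintype I] [Fintype J] [Fintype C] [Fintype D]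

/-- The probability of a given play of `n` steps, under initial distribution `δ`
and strategies `σ`, `τ`. -/
def playProb (G : Game K I J C D) (δ : FDist K) (σ : Strategy1 I C) (τ : Strategy2 J D) :
    ∀ n : ℕ, Hist K C D n → ℝ
  | 0, h => δ.f h.first
  | n + 1, h =>
      G.playProb δ σ τ n h.init *
        ∑ i : I, ∑ j : J,
          (σ h.init.sig1).f i * (τ h.init.sig2).f j *
            G.p h.init.last i j (h.steps (Fin.last n))

/-- The probability that a play with `n+1` states visits the target set. -/
def reachProb (G : Game K I J C D) (δ : FDist K) (σ : Strategy1 I C)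
    (τ : Strategy2 J D) (n : ℕ) : ℝ :=
  ∑ h : Hist K C D n, if h.visits G.T then G.playProb δ σ τ n h else 0

/-- The reachability probability `γ₁(δ,σ,τ)`: the supremum over horizons of the
probability that the play visits the target set. -/
def val (G : Game K I J C D) (δ : FDist K) (σ : Strategy1 I C) (τ : Strategy2 J D) : ℝ :=
  ⨆ n : ℕ, G.reachProb δ σ τ n

/-- `δ` is almost-surely winning for player 1. -/
def AlmostSureWin1 (G : Game K I J C D) (δ : FDist K) : Prop :=
  ∃ σ, ∀ τ, G.val δ σ τ = 1

/-- `δ` is positively winning for player 1. -/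
def PositiveWin1 (G : Game K I J C D) (δ : FDist K) : Prop :=
  ∃ σ, ∀ τ, 0 < G.val δ σ τ

/-- `δ` is positively winning for player 2. -/
def PositiveWin2 (G : Game K I J C D) (δ : FDist K) : Prop :=
  ∃ τ, ∀ σ, G.val δ σ τ < 1

/-- `δ` is surely (equivalently here, almost-surely) winning for player 2. -/
def SureWin2 (G : Game K I J C D) (δ : FDist K) : Prop :=
  ∃ τ, ∀ σ, G.val δ σ τ = 0

/-- One-step belief operator of player 1. -/
def B1 (G : Game K I J C D) (L : Finset K) (c : C) : Finset K :=
  Finset.univ.filter fun k => ∃ l ∈ L, ∃ d : D, 0 < G.p l (G.act₁ c) (G.act₂ d) (c, d, k)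

/-- One-step belief operator of player 2. -/
def B2 (G : Game K I J C D) (L : Finset K) (d : D) : Finset K :=
  Finset.univ.filter fun k => ∃ l ∈ L, ∃ c : C, 0 < G.p l (G.act₁ c) (G.act₂ d) (c, d, k)

/-- Belief of player 1 after a sequence of signals. -/
def B1seq (G : Game K I J C D) (L : Finset K) (cs : List C) : Finset K := cs.foldl G.B1 L

/-- Belief of player 2 after a sequence of signals. -/
def B2seq (G : Game K I J C D) (L : Finset K) (ds : List D) : Finset K := ds.foldl G.B2 L

/-- One-step pessimistic belief operator of player 1. -/
def B1p (G : Game K I J C D) (L : Finset K) (c : C) : Finset K := G.B1 (L \ G.T) c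

/-- One-step pessimistic belief operator of player 2. -/
def B2p (G : Game K I J C D) (L : Finset K) (d : D) : Finset K := G.B2 (L \ G.T) d

/-- Pessimistic belief of player 1 after a sequence of signals. -/
def B1pseq (G : Game K I J C D) (L : Finset K) (cs : List C) : Finset K := cs.foldl G.B1p L

/-- Pessimistic belief of player 2 after a sequence of signals. -/
def B2pseq (G : Game K I J C D) (L : Finset K) (ds : List D) : Finset K := ds.foldl G.B2p L

/-- The operator `Φ` on collections of subsets of `K ∖ T`. -/
def Phi (G : Game K I J C D) (𝓛 : Set (Finset K)) : Set (Finset K) :=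
  {L | L ∈ 𝓛 ∧ L ∩ G.T = ∅ ∧ ∃ j : J, ∀ d : D, G.act₂ d = j → G.B2 L d ∈ 𝓛}

theorem Phi_mono (G : Game K I J C D) : Monotone G.Phi := by
  intro A B hAB L hL
  obtain ⟨h1, h2, j, hj⟩ := hL
  exact ⟨hAB h1, h2, j, fun d hd => hAB (hj d hd)⟩

/-- `𝓛_∞`, the greatest fixpoint of `Φ`. -/
def Linf (G : Game K I J C D) : Set (Finset K) :=
  OrderHom.gfp ⟨G.Phi, G.Phi_mono⟩

/-- The winning condition of the `𝓛`-game for player 1, on a play with initial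
support `L`: some state `k_m` is a target state and all earlier pessimistic
beliefs of player 1 avoid `𝓛`. -/
def LWin (G : Game K I J C D) (𝓛 : Set (Finset K)) (L : Finset K) {n : ℕ}
    (h : Hist K C D n) : Prop :=
  ∃ m : Fin (n + 1), h.state m ∈ G.T ∧
    ∀ r : ℕ, 1 ≤ r → r ≤ m.val → G.B1pseq L (h.sig1.take r) ∉ 𝓛

/-- The payoff `γ₁^𝓛(δ,σ,τ)` of player 1 in the `𝓛`-game, for an initial
distribution `δ` with support `L`. -/
def Lval (G : Game K I J C D) (𝓛 : Set (Finset K)) (L : Finset K) (δ : FDist K)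
    (σ : Strategy1 I C) (τ : Strategy2 J D) : ℝ :=
  ⨆ n : ℕ, ∑ h : Hist K C D n, if G.LWin 𝓛 L h then G.playProb δ σ τ n h else 0

end Game

/-- The uniformly random strategy `σ_R` of player 1. -/
def randomStrat (I C : Type*) [Fintype I] [Nonempty I] : Strategy1 I C :=
  fun _ => uniform Finset.univ Finset.univ_nonempty

namespace Hist

variable {K C D : Type*} {n : ℕ}

def snoc (g : Hist K C D n) (x : C × D × K) : Hist K C D (n + 1) :=
  ⟨g.first, Fin.snoc g.steps x⟩

@[simp]
theorem init_snoc (g : Hist K C D n) (x : C × D × K) : (g.snoc x).init = g := by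
  simp [snoc, init]

@[simp]
theorem snoc_steps_last (g : Hist K C D n) (x : C × D × K) :
    (g.snoc x).steps (Fin.last n) = x := by
  simp [snoc]

def snocEquiv : Hist K C D n × (C × D × K) ≃ Hist K C D (n + 1) where
  toFun gx := gx.1.snoc gx.2
  invFun h := (h.init, h.steps (Fin.last n))
  left_inv := fun ⟨g, x⟩ => by simp
  right_inv := fun ⟨k, s⟩ => by simp [snoc, init, ← Fin.init_def, Fin.snoc_init_self]

def zeroEquiv : K ≃ Hist K C D 0 where
  toFun k := ⟨k, Fin.elim0⟩
  invFun h := h.first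
  left_inv _ := rfl
  right_inv := fun ⟨_, _⟩ => by simp [Subsingleton.elim _ (Fin.elim0 : Fin 0 → C × D × K)]

variable [Fintype K] [Fintype C] [Fintype D] {M : Type*} [AddCommMonoid M]

theorem sum_zero (f : Hist K C D 0 → M) : ∑ h, f h = ∑ k, f ⟨k, Fin.elim0⟩ :=
  (zeroEquiv.sum_comp f).symm

theorem sum_succ (f : Hist K C D (n + 1) → M) :
    ∑ h, f h = ∑ g : Hist K C D n, ∑ x, f (g.snoc x) := by
  rw [← snocEquiv.sum_comp, Fintype.sum_prod_type]
  rfl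

end Hist

namespace Game

variable {K I J C D : Type*} [Fintype K] [Fintype I] [Fintype J] [Fintype C] [Fintype D]
  (G : Game K I J C D) {δ : FDist K} {σ σ' : Strategy1 I C} {τ : Strategy2 J D} {n : ℕ}

def transProb (σ : Strategy1 I C) (τ : Strategy2 J D) (g : Hist K C D n) (x : C × D × K) :
    ℝ :=
  ∑ i, ∑ j, (σ g.sig1).f i * (τ g.sig2).f j * G.p g.last i j x

theorem playProb_succ (h : Hist K C D (n + 1)) :
    G.playProb δ σ τ (n + 1) h =
      G.playProb δ σ τ n h.init * G.transProb σ τ h.init (h.steps (Fin.last n)) :=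
  rfl

theorem transProb_nonneg (g : Hist K C D n) (x : C × D × K) : 0 ≤ G.transProb σ τ g x :=
  Finset.sum_nonneg fun i _ => Finset.sum_nonneg fun j _ =>
    mul_nonneg (mul_nonneg ((σ _).nonneg i) ((τ _).nonneg j)) (G.p_nonneg _ _ _ _)

theorem sum_transProb (g : Hist K C D n) : ∑ x, G.transProb σ τ g x = 1 := by
  simp only [transProb, Finset.sum_comm (γ := C × D × K), ← Finset.mul_sum, G.p_sum, mul_one,
    (σ _).sum_one, (τ _).sum_one]

theorem transProb_pos_iff (g : Hist K C D n) (x : C × D × K) :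
    0 < G.transProb σ τ g x ↔
      ∃ i j, 0 < (σ g.sig1).f i ∧ 0 < (τ g.sig2).f j ∧ 0 < G.p g.last i j x := by
  have hσ := (σ g.sig1).nonneg
  have hτ := (τ g.sig2).nonneg
  have hterm : ∀ i j, 0 ≤ (σ g.sig1).f i * (τ g.sig2).f j * G.p g.last i j x := fun i j =>
    mul_nonneg (mul_nonneg (hσ i) (hτ j)) (G.p_nonneg _ _ _ _)
  simp only [transProb, Finset.mem_univ, true_and,
    Finset.sum_pos_iff_of_nonneg fun i _ => Finset.sum_nonneg fun j _ => hterm i j,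
    Finset.sum_pos_iff_of_nonneg fun j _ => hterm _ j]
  refine exists_congr fun i => exists_congr fun j =>
    ⟨fun h => ?_, fun ⟨hi, hj, hp⟩ => by positivity⟩
  have hστ := pos_of_mul_pos_left h (G.p_nonneg _ _ _ _)
  exact ⟨pos_of_mul_pos_left hστ (hτ j), pos_of_mul_pos_right hστ (hσ i),
    pos_of_mul_pos_right h (mul_nonneg (hσ i) (hτ j))⟩

theorem playProb_nonneg : ∀ n (h : Hist K C D n), 0 ≤ G.playProb δ σ τ n h
  | 0, h => δ.nonneg h.first
  | n + 1, h => mul_nonneg (playProb_nonneg n h.init) (G.transProb_nonneg _ _)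

theorem sum_playProb : ∀ n, ∑ h : Hist K C D n, G.playProb δ σ τ n h = 1
  | 0 => by rw [Hist.sum_zero]; exact δ.sum_one
  | n + 1 => by
    rw [Hist.sum_succ]
    simp only [playProb_succ, Hist.init_snoc, Hist.snoc_steps_last,
      ← Finset.mul_sum, sum_transProb, mul_one]
    exact sum_playProb n

theorem reachProb_nonneg (n : ℕ) : 0 ≤ G.reachProb δ σ τ n :=
  Finset.sum_nonneg fun h _ => by
    split_ifs
    exacts [G.playProb_nonneg n h, le_rfl]

theorem reachProb_le_one (n : ℕ) : G.reachProb δ σ τ n ≤ 1 :=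
  calc G.reachProb δ σ τ n ≤ ∑ h, G.playProb δ σ τ n h :=
        Finset.sum_le_sum fun h _ => by
          split_ifs
          exacts [le_rfl, G.playProb_nonneg n h]
    _ = 1 := G.sum_playProb n

theorem val_nonneg : 0 ≤ G.val δ σ τ :=
  Real.iSup_nonneg G.reachProb_nonneg

theorem val_pos_iff : 0 < G.val δ σ τ ↔ ∃ n, 0 < G.reachProb δ σ τ n := by
  refine ⟨fun h => ?_, fun ⟨n, hn⟩ => hn.trans_le ?_⟩
  · by_contra! hle
    exact h.not_ge (Real.iSup_le hle le_rfl)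
  · exact le_ciSup ⟨1, Set.forall_mem_range.2 G.reachProb_le_one⟩ n

theorem playProb_pos_of_support_subset (hσ : ∀ s i, 0 < (σ s).f i → 0 < (σ' s).f i) :
    ∀ n (h : Hist K C D n), 0 < G.playProb δ σ τ n h → 0 < G.playProb δ σ' τ n h
  | 0, _, hp => hp
  | n + 1, h, hp => by
    rw [playProb_succ] at hp ⊢
    obtain ⟨i, j, hi, hj, hij⟩ :=
      (G.transProb_pos_iff _ _).1 (pos_of_mul_pos_right hp (G.playProb_nonneg _ _))
    exact mul_pos
      (playProb_pos_of_support_subset hσ n _ (pos_of_mul_pos_left hp (G.transProb_nonneg _ _)))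
      ((G.transProb_pos_iff _ _).2 ⟨i, j, hσ _ _ hi, hj, hij⟩)

theorem reachProb_pos_of_support_subset (hσ : ∀ s i, 0 < (σ s).f i → 0 < (σ' s).f i)
    (hp : 0 < G.reachProb δ σ τ n) : 0 < G.reachProb δ σ' τ n := by
  simp only [reachProb, ← Finset.sum_filter] at hp ⊢
  obtain ⟨h, hT, hh⟩ := (Finset.sum_pos_iff_of_nonneg fun h _ => G.playProb_nonneg n h).1 hp
  exact (Finset.sum_pos_iff_of_nonneg fun h _ => G.playProb_nonneg n h).2
    ⟨h, hT, G.playProb_pos_of_support_subset hσ n h hh⟩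

theorem val_pos_of_support_subset (hσ : ∀ s i, 0 < (σ s).f i → 0 < (σ' s).f i)
    (hp : 0 < G.val δ σ τ) : 0 < G.val δ σ' τ :=
  G.val_pos_iff.2 <| (G.val_pos_iff.1 hp).imp fun _ => G.reachProb_pos_of_support_subset hσ

end Game

theorem randomStrat_pos {I : Type*} (C : Type*) [Fintype I] [Nonempty I] (s : List C) (i : I) :
    0 < (randomStrat I C s).f i := by
  simp only [randomStrat, uniform, Finset.mem_univ, if_true, Finset.card_univ]
  positivity

variable {K I J C D : Type*} [Fintype K] [Fintype I] [Fintype J] [Fintype C] [Fintype D]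
  [Nonempty K] [Nonempty I] [Nonempty J] [Nonempty C] [Nonempty D]

/-- every initial distribution is positively winning for player 1 or
surely winning for player 2, and not both. -/
theorem positive1_or_sure2 (G : Game K I J C D) (δ : FDist K) :
    (G.PositiveWin1 δ ∨ G.SureWin2 δ) ∧ ¬(G.PositiveWin1 δ ∧ G.SureWin2 δ) := by
  refine ⟨?_, fun ⟨⟨σ, hσ⟩, τ, hτ⟩ => (hσ τ).ne' (hτ σ)⟩
  by_cases hrandom : ∀ τ, 0 < G.val δ (randomStrat I C) τ
  · exact .inl ⟨randomStrat I C, hrandom⟩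
  obtain ⟨τ, hτ⟩ := not_forall.1 hrandom
  refine .inr ⟨τ, fun σ => le_antisymm (not_lt.1 fun hσ => hτ ?_) G.val_nonneg⟩
  exact G.val_pos_of_support_subset (fun s i _ => randomStrat_pos C s i) hσ
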